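/- Let a, b ∈ ℝ and define ℓ(t) = log(1 + e^{a + bt}) for t ∈ ℝ. Then ℓ is smooth, ℓ''(t) = b² λ(a + bt)(1 − λ(a + bt)) ≥ 0, and |ℓ'''(t)| ≤ |b| ℓ''(t) for every t ∈ ℝ, where λ(z) = e^z/(1 + e^z) is the logistic CDF. -/

import Mathlib

/-- The logistic CDF `λ(z) = e^z / (1 + e^z)`. -/
noncomputable def logisticCDF (z : ℝ) : ℝ := Real.exp z / (1 + Real.exp z)

lemma one_add_exp_pos (z : ℝ) : 0 < 1 + Real.exp z := by positivity

lemma logisticCDF_pos (z : ℝ) : 0 < logisticCDF z := by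
  unfold logisticCDF
  positivity

lemma logisticCDF_lt_one (z : ℝ) : logisticCDF z < 1 := by
  unfold logisticCDF
  rw [div_lt_one (one_add_exp_pos z)]
  linarith

lemma hasDerivAt_logisticCDF (z : ℝ) :
    HasDerivAt logisticCDF (logisticCDF z * (1 - logisticCDF z)) z := by
  have h : HasDerivAt (fun z : ℝ => Real.exp z / (1 + Real.exp z))
      ((Real.exp z * (1 + Real.exp z) - Real.exp z * Real.exp z) / (1 + Real.exp z) ^ 2) z := by
    have := (Real.hasDerivAt_exp z).div ((hasDerivAt_const z 1).add (Real.hasDerivAt_exp z))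
      (ne_of_gt (one_add_exp_pos z))
    simp at this; exact this
  refine h.congr_deriv ?_
  unfold logisticCDF
  have hne := ne_of_gt (one_add_exp_pos z)
  field_simp

lemma hasDerivAt_inner (a b t : ℝ) :
    HasDerivAt (fun t : ℝ => a + b * t) b t := by
  simpa using ((hasDerivAt_id t).const_mul b).const_add a

lemma hasDerivAt_L1 (a b t : ℝ) :
    HasDerivAt (fun t : ℝ => Real.log (1 + Real.exp (a + b * t)))
      (b * logisticCDF (a + b * t)) t := by
  have h1 : HasDerivAt (fun t : ℝ => 1 + Real.exp (a + b * t))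
      (Real.exp (a + b * t) * b) t :=
    by have := (((Real.hasDerivAt_exp (a + b * t)).comp t (hasDerivAt_inner a b t))).const_add 1; exact this
  have h2 := h1.log (ne_of_gt (one_add_exp_pos (a + b * t)))
  convert h2 using 1
  unfold logisticCDF
  ring

lemma hasDerivAt_L2 (a b t : ℝ) :
    HasDerivAt (fun t : ℝ => b * logisticCDF (a + b * t))
      (b ^ 2 * logisticCDF (a + b * t) * (1 - logisticCDF (a + b * t))) t := by
  have h := ((hasDerivAt_logisticCDF (a + b * t)).comp t (hasDerivAt_inner a b t)).const_mul b
  refine h.congr_deriv ?_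
  ring

lemma hasDerivAt_L3 (a b t : ℝ) :
    HasDerivAt (fun t : ℝ => b ^ 2 * logisticCDF (a + b * t) * (1 - logisticCDF (a + b * t)))
      (b ^ 3 * logisticCDF (a + b * t) * (1 - logisticCDF (a + b * t))
        * (1 - 2 * logisticCDF (a + b * t))) t := by
  have hL : HasDerivAt (fun t : ℝ => logisticCDF (a + b * t))
      (logisticCDF (a + b * t) * (1 - logisticCDF (a + b * t)) * b) t :=
    by have := (hasDerivAt_logisticCDF (a + b * t)).comp t (hasDerivAt_inner a b t); exact this
  have h := ((hL.const_mul (b ^ 2)).mul ((hasDerivAt_const t (1:ℝ)).sub hL))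
  refine h.congr_deriv ?_
  simp only [Pi.sub_apply]
  ring

lemma deriv2_eq (a b : ℝ) :
    iteratedDeriv 2 (fun t : ℝ => Real.log (1 + Real.exp (a + b * t))) =
      fun t => b ^ 2 * logisticCDF (a + b * t) * (1 - logisticCDF (a + b * t)) := by
  have h1 : deriv (fun t : ℝ => Real.log (1 + Real.exp (a + b * t))) =
      fun t => b * logisticCDF (a + b * t) :=
    funext fun t => (hasDerivAt_L1 a b t).deriv
  have h2 : deriv (fun t : ℝ => b * logisticCDF (a + b * t)) =
      fun t => b ^ 2 * logisticCDF (a + b * t) * (1 - logisticCDF (a + b * t)) :=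
    funext fun t => (hasDerivAt_L2 a b t).deriv
  rw [iteratedDeriv_succ, iteratedDeriv_one, h1, h2]

lemma deriv3_eq (a b : ℝ) :
    iteratedDeriv 3 (fun t : ℝ => Real.log (1 + Real.exp (a + b * t))) =
      fun t => b ^ 3 * logisticCDF (a + b * t) * (1 - logisticCDF (a + b * t))
        * (1 - 2 * logisticCDF (a + b * t)) := by
  rw [iteratedDeriv_succ, deriv2_eq]
  exact funext fun t => (hasDerivAt_L3 a b t).deriv

/-- For `ℓ(t) = log(1 + e^{a + b t})`: `ℓ` is smooth, its second derivative is
`b² λ(a+bt)(1 − λ(a+bt)) ≥ 0`, and `|ℓ'''(t)| ≤ |b| ℓ''(t)` for every `t`. -/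
theorem logistic_logpartition_derivatives (a b : ℝ) :
    ContDiff ℝ (⊤ : ℕ∞) (fun t : ℝ => Real.log (1 + Real.exp (a + b * t))) ∧
    (∀ t : ℝ,
      iteratedDeriv 2 (fun t : ℝ => Real.log (1 + Real.exp (a + b * t))) t =
        b ^ 2 * logisticCDF (a + b * t) * (1 - logisticCDF (a + b * t))) ∧
    (∀ t : ℝ,
      0 ≤ iteratedDeriv 2 (fun t : ℝ => Real.log (1 + Real.exp (a + b * t))) t) ∧
    (∀ t : ℝ,
      |iteratedDeriv 3 (fun t : ℝ => Real.log (1 + Real.exp (a + b * t))) t| ≤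
        |b| * iteratedDeriv 2 (fun t : ℝ => Real.log (1 + Real.exp (a + b * t))) t) := by
  have hsmooth : ContDiff ℝ (⊤ : ℕ∞) (fun t : ℝ => Real.log (1 + Real.exp (a + b * t))) := by
    have h : ContDiff ℝ (⊤ : ℕ∞) (fun t : ℝ => 1 + Real.exp (a + b * t)) :=
      contDiff_const.add ((contDiff_const.add (contDiff_const.mul contDiff_id)).exp)
    exact h.log fun t => ne_of_gt (one_add_exp_pos (a + b * t))
  refine ⟨hsmooth, ?_, ?_, ?_⟩
  · intro t; rw [deriv2_eq]
  · intro t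
    rw [deriv2_eq]
    have h1 := logisticCDF_pos (a + b * t)
    have h2 := logisticCDF_lt_one (a + b * t)
    show (0:ℝ) ≤ b ^ 2 * logisticCDF (a + b * t) * (1 - logisticCDF (a + b * t))
    exact mul_nonneg (mul_nonneg (sq_nonneg b) h1.le) (by linarith)
  · intro t
    rw [deriv2_eq, deriv3_eq]
    set L := logisticCDF (a + b * t) with hL
    have h1 := logisticCDF_pos (a + b * t)
    have h2 := logisticCDF_lt_one (a + b * t)
    rw [← hL] at h1 h2
    have hnn : (0:ℝ) ≤ b ^ 2 * L * (1 - L) := mul_nonneg (mul_nonneg (sq_nonneg b) h1.le) (by linarith)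
    have habs : |1 - 2 * L| ≤ 1 := abs_le.2 ⟨by linarith, by linarith⟩
    calc |b ^ 3 * L * (1 - L) * (1 - 2 * L)|
        = |b ^ 3 * L * (1 - L)| * |1 - 2 * L| := abs_mul _ _
      _ ≤ |b ^ 3 * L * (1 - L)| * 1 :=
          mul_le_mul_of_nonneg_left habs (abs_nonneg _)
      _ = |b * (b ^ 2 * L * (1 - L))| := by ring_nf
      _ = |b| * (b ^ 2 * L * (1 - L)) := by rw [abs_mul, abs_of_nonneg hnn]
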